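/- arXiv:2208.12307 — 7 statements merged into one kernel-verified Lean document; each statement's English description precedes it below -/
import Mathlib

section
/- Let r be a positive integer, w = (w₁, w₁', w₂, w₂') ∈ ℤ≥0⁴ and v = (v₁, v₂) ∈ ℤ≥0². Define v̄₁ = min(v₁, w₁', w₁ + r·v₂, w₁ + r·w₂) and v̄₂ = min(v₂, w₂, w₂' + r·v₁, w₂' + r·w₁'). Then v̄ = (v̄₁, v̄₂) satisfies v̄₁ ≤ v₁ and v̄₂ ≤ v₂, the pair (v̄, w) is l-dominant, and every v' = (v₁', v₂') ∈ ℤ≥0² with v₁' ≤ v₁, v₂' ≤ v₂ such that (v', w) is l-dominant satisfies v₁' ≤ v̄₁ and v₂' ≤ v̄₂. In other words, v̄ is the unique maximal element of {v' ∈ ℤ≥0² : v' ≤ v componentwise and (v', w) is l-dominant}. -/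
/-- The pair `(v, w)` with `v = (v₁, v₂)`, `w = (w₁, w₁', w₂, w₂')` is `l`-dominant:
`w₁ − v₁ + r·v₂ ≥ 0`, `w₁' − v₁ ≥ 0`, `w₂ − v₂ ≥ 0`, `w₂' − v₂ + r·v₁ ≥ 0`. -/
def LDominant (r w₁ w₁' w₂ w₂' v₁ v₂ : ℕ) : Prop :=
  v₁ ≤ w₁ + r * v₂ ∧ v₁ ≤ w₁' ∧ v₂ ≤ w₂ ∧ v₂ ≤ w₂' + r * v₁

/-! Both coordinates of `v̄` have the shape `min (min x a') (min (a + r * y) (a + r * b'))`, the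
second with the roles of `(v₁, w₁, w₁')` and `(v₂, w₂', w₂)` exchanged. Maximality is immediate.
The only non-obvious part of dominance is `v̄₁ ≤ w₁ + r * v̄₂` (and its mirror image): distributing
`w₁ + r * ·` over the minimum defining `v̄₂`, the two terms coming from `w₂' + r * ·` are handled
by `v̄₁ ≤ v₁ ≤ r * r * v₁` when `r ≠ 0`, and by `v̄₁ ≤ w₁` when `r = 0`. -/

lemma le_add_mul_add_mul {r a c c' x y : ℕ} (hx : a ≤ x) (hy : a ≤ c + r * y) :
    a ≤ c + r * (c' + r * x) := by
  rcases Nat.eq_zero_or_pos r with rfl | hr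
  · simpa using hy
  · calc a ≤ x := hx
      _ ≤ r * (r * x) := Nat.le_mul_of_pos_left _ hr |>.trans (Nat.le_mul_of_pos_left _ hr)
      _ ≤ c + r * (c' + r * x) := le_add_left (Nat.mul_le_mul_left r (le_add_left le_rfl))

lemma min_le_add_mul_min (r a a' b b' x y : ℕ) :
    min (min x a') (min (a + r * y) (a + r * b')) ≤
      a + r * min (min y b') (min (b + r * x) (b + r * a')) := by
  set m := min (min x a') (min (a + r * y) (a + r * b'))
  have hx : m ≤ x := (min_le_left _ _).trans (min_le_left _ _)
  have ha' : m ≤ a' := (min_le_left _ _).trans (min_le_right _ _)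
  have hy : m ≤ a + r * y := (min_le_right _ _).trans (min_le_left _ _)
  have hb' : m ≤ a + r * b' := (min_le_right _ _).trans (min_le_right _ _)
  simp only [← Nat.mul_min_mul_left, ← min_add_add_left]
  exact le_min (le_min hy hb') (le_min (le_add_mul_add_mul hx hy) (le_add_mul_add_mul ha' hy))

lemma le_min_of_le {r a a' b' x y x' y' : ℕ} (hx : x' ≤ x) (hy : y' ≤ y) (ha' : x' ≤ a')
    (hb' : y' ≤ b') (ha : x' ≤ a + r * y') :
    x' ≤ min (min x a') (min (a + r * y) (a + r * b')) :=
  le_min (le_min hx ha') (le_min (ha.trans (by gcongr)) (ha.trans (by gcongr)))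

theorem stmt_1_general (r : ℕ) (w₁ w₁' w₂ w₂' v₁ v₂ : ℕ) :
    min (min v₁ w₁') (min (w₁ + r * v₂) (w₁ + r * w₂)) ≤ v₁ ∧
    min (min v₂ w₂) (min (w₂' + r * v₁) (w₂' + r * w₁')) ≤ v₂ ∧
    LDominant r w₁ w₁' w₂ w₂'
      (min (min v₁ w₁') (min (w₁ + r * v₂) (w₁ + r * w₂)))
      (min (min v₂ w₂) (min (w₂' + r * v₁) (w₂' + r * w₁'))) ∧
    ∀ v₁' v₂' : ℕ, v₁' ≤ v₁ → v₂' ≤ v₂ → LDominant r w₁ w₁' w₂ w₂' v₁' v₂' →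
      v₁' ≤ min (min v₁ w₁') (min (w₁ + r * v₂) (w₁ + r * w₂)) ∧
      v₂' ≤ min (min v₂ w₂) (min (w₂' + r * v₁) (w₂' + r * w₁')) := by
  refine ⟨(min_le_left _ _).trans (min_le_left _ _), (min_le_left _ _).trans (min_le_left _ _),
    ⟨min_le_add_mul_min .., (min_le_left _ _).trans (min_le_right _ _),
      (min_le_left _ _).trans (min_le_right _ _), min_le_add_mul_min ..⟩, ?_⟩
  rintro v₁' v₂' h₁ h₂ ⟨hw₁, hw₁', hw₂, hw₂'⟩
  exact ⟨le_min_of_le h₁ h₂ hw₁' hw₂ hw₁, le_min_of_le h₂ h₁ hw₂ hw₁' hw₂'⟩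

theorem stmt_1 (r : ℕ) (hr : 0 < r) (w₁ w₁' w₂ w₂' v₁ v₂ : ℕ) :
    min (min v₁ w₁') (min (w₁ + r * v₂) (w₁ + r * w₂)) ≤ v₁ ∧
    min (min v₂ w₂) (min (w₂' + r * v₁) (w₂' + r * w₁')) ≤ v₂ ∧
    LDominant r w₁ w₁' w₂ w₂'
      (min (min v₁ w₁') (min (w₁ + r * v₂) (w₁ + r * w₂)))
      (min (min v₂ w₂) (min (w₂' + r * v₁) (w₂' + r * w₁'))) ∧
    ∀ v₁' v₂' : ℕ, v₁' ≤ v₁ → v₂' ≤ v₂ → LDominant r w₁ w₁' w₂ w₂' v₁' v₂' →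
      v₁' ≤ min (min v₁ w₁') (min (w₁ + r * v₂) (w₁ + r * w₂)) ∧
      v₂' ≤ min (min v₂ w₂) (min (w₂' + r * v₁) (w₂' + r * w₁')) :=
  stmt_1_general r w₁ w₁' w₂ w₂' v₁ v₂
end

section
/- Let r be a positive integer, w = (w₁, w₁', w₂, w₂') ∈ ℤ≥0⁴ and v = (v₁, v₂) ∈ ℤ≥0². There exists a tuple (x₁, x₂, y₁, …, y_r) ∈ E_w with rank A = v₁ and rank B = v₂ if and only if (v, w) is l-dominant, i.e. if and only if w₁ − v₁ + r·v₂ ≥ 0, w₁' − v₁ ≥ 0, w₂ − v₂ ≥ 0 and w₂' − v₂ + r·v₁ ≥ 0. -/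
open Matrix

noncomputable section

/-- The space `E_w` of tuples `(x₁, x₂, y₁, …, y_r)` of complex matrices, where `x₁` has size
`w₁'×w₁`, `x₂` has size `w₂'×w₂`, and each `y_h` has size `w₁'×w₂`. -/
abbrev EW (r w₁ w₁' w₂ w₂' : ℕ) : Type :=
  Matrix (Fin w₁') (Fin w₁) ℂ × Matrix (Fin w₂') (Fin w₂) ℂ ×
    (Fin r → Matrix (Fin w₁') (Fin w₂) ℂ)

/-- The horizontally concatenated block matrix `A = [x₁ y₁ ⋯ y_r]`. -/
def matA {r m a b : ℕ} (x₁ : Matrix (Fin m) (Fin a) ℂ)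
    (y : Fin r → Matrix (Fin m) (Fin b) ℂ) :
    Matrix (Fin m) (Fin a ⊕ Fin r × Fin b) ℂ :=
  Matrix.of fun i => Sum.elim (fun j => x₁ i j) (fun p => y p.1 i p.2)

/-- The vertically stacked block matrix `B = [x₂; y₁; ⋯; y_r]`. -/
def matB {r n a b : ℕ} (x₂ : Matrix (Fin a) (Fin n) ℂ)
    (y : Fin r → Matrix (Fin b) (Fin n) ℂ) :
    Matrix (Fin a ⊕ Fin r × Fin b) (Fin n) ℂ :=
  Matrix.of fun i j => Sum.elim (fun i₂ => x₂ i₂ j) (fun p => y p.1 p.2 j) i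

/-- The subspace `ℂ^{w₂'} × X₁^{×r}` of `ℂ^{w₂'} × (ℂ^{w₁'})^r`: all tuples `(a, u₁, …, u_r)`
whose last `r` components `u_h` all lie in `X₁`. -/
def prodSub (r w₂' w₁' : ℕ) (X₁ : Submodule ℂ (Fin w₁' → ℂ)) :
    Submodule ℂ (Fin w₂' ⊕ Fin r × Fin w₁' → ℂ) :=
  ⨅ h : Fin r, X₁.comap (LinearMap.funLeft ℂ ℂ fun i => Sum.inr (h, i))

/-!
Necessity: the columns of `A` are those of `x₁` and of the `y_h`, and each `y_h` is a block of
rows of `B`, so `rank A ≤ w₁ + r · rank B`. Transposing every block exchanges the roles of `A` and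
`B`, which gives the mirror inequality; the other two bounds are the sizes of `A` and `B`.

Sufficiency: by the same symmetry we may assume `v₁ ≤ v₂`. Take `x₁ = 0`, let `x₂` be the identity
on the first `c = v₂ - r v₁` coordinates and let `y_h` have a one at `(i, c + h v₁ + i)` for every
`i < v₁` with `c + h v₁ + i < v₂`. Then each column of `A` is zero or a unit vector `e_i` with
`i < v₁`, and `y₀` contains all of them; each row of `B` is zero or a unit vector `e_j` with
`j < v₂`, and the rows of `x₂` and of the `y_h` run through all of them.
-/

open Submodule Module

theorem Submodule.finrank_finset_sup_le_sum {K V ι : Type*} [DivisionRing K] [AddCommGroup V]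
    [Module K V] [FiniteDimensional K V] (s : Finset ι) (p : ι → Submodule K V) :
    finrank K (s.sup p : Submodule K V) ≤ ∑ i ∈ s, finrank K (p i) := by
  classical
  induction s using Finset.induction_on with
  | empty => simp
  | insert a s ha ih =>
    rw [Finset.sup_insert, Finset.sum_insert ha]
    exact (finrank_add_le_finrank_add_finrank _ _).trans (by omega)

namespace Matrix

theorem card_le_rank_of_forall_exists_row_eq_single {R m n : Type*} [CommSemiring R]
    [StrongRankCondition R] [Fintype n] [DecidableEq n] (M : Matrix m n R) (s : Finset n)
    (h : ∀ j ∈ s, ∃ i, M i = Pi.single j 1) : s.card ≤ M.rank := by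
  choose g hg using h
  have hsub : M.submatrix (fun j : s => g j j.2) (Subtype.val : s → n) = 1 := by
    ext j k
    simp only [submatrix_apply, hg, Pi.single_apply, one_apply, Subtype.ext_iff, eq_comm]
  calc s.card = (1 : Matrix s s R).rank := by simp [rank_one]
    _ = (M.submatrix (fun j : s => g j j.2) Subtype.val).rank := by rw [hsub]
    _ ≤ M.rank := rank_submatrix_le _ _ _

end Matrix

section BlockMatrices

variable {r m n a b : ℕ}

theorem rank_matA_le (x₁ : Matrix (Fin m) (Fin a) ℂ) (y : Fin r → Matrix (Fin m) (Fin b) ℂ) :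
    (matA x₁ y).rank ≤ x₁.rank + ∑ h, (y h).rank := by
  simp only [rank_eq_finrank_span_cols]
  have hspan : span ℂ (Set.range (matA x₁ y).col) ≤
      span ℂ (Set.range x₁.col) ⊔ Finset.univ.sup fun h => span ℂ (Set.range (y h).col) := by
    rw [span_le]
    rintro _ ⟨j | ⟨h, j⟩, rfl⟩
    · exact mem_sup_left (subset_span ⟨j, rfl⟩)
    · exact mem_sup_right (Finset.le_sup (f := fun h => span ℂ (Set.range (y h).col))
        (Finset.mem_univ h) (subset_span ⟨j, rfl⟩))
  refine (finrank_mono hspan).trans ((finrank_add_le_finrank_add_finrank _ _).trans ?_)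
  exact Nat.add_le_add_left (finrank_finset_sup_le_sum _ _) _

theorem rank_le_rank_matB (x₂ : Matrix (Fin a) (Fin n) ℂ) (y : Fin r → Matrix (Fin b) (Fin n) ℂ)
    (h : Fin r) : (y h).rank ≤ (matB x₂ y).rank :=
  rank_submatrix_le (matB x₂ y) (fun i => Sum.inr (h, i)) id

theorem transpose_matA (x₁ : Matrix (Fin m) (Fin a) ℂ) (y : Fin r → Matrix (Fin m) (Fin b) ℂ) :
    (matA x₁ y)ᵀ = matB x₁ᵀ fun h => (y h)ᵀ := by
  ext (j | ⟨h, j⟩) i <;> rfl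

theorem transpose_matB (x₂ : Matrix (Fin a) (Fin n) ℂ) (y : Fin r → Matrix (Fin b) (Fin n) ℂ) :
    (matB x₂ y)ᵀ = matA x₂ᵀ fun h => (y h)ᵀ := by
  ext j (i | ⟨h, i⟩) <;> rfl

end BlockMatrices

def RanksRealizable (r w₁ w₁' w₂ w₂' v₁ v₂ : ℕ) : Prop :=
  ∃ p : EW r w₁ w₁' w₂ w₂', (matA p.1 p.2.2).rank = v₁ ∧ (matB p.2.1 p.2.2).rank = v₂

namespace RanksRealizable

variable {r w₁ w₁' w₂ w₂' v₁ v₂ : ℕ}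

theorem swap (hv : RanksRealizable r w₁ w₁' w₂ w₂' v₁ v₂) :
    RanksRealizable r w₂' w₂ w₁' w₁ v₂ v₁ := by
  obtain ⟨⟨x₁, x₂, y⟩, hA, hB⟩ := hv
  exact ⟨(x₂ᵀ, x₁ᵀ, fun h => (y h)ᵀ), by simp [← transpose_matB, hB],
    by simp [← transpose_matA, hA]⟩

theorem le_add_mul (hv : RanksRealizable r w₁ w₁' w₂ w₂' v₁ v₂) : v₁ ≤ w₁ + r * v₂ := by
  obtain ⟨⟨x₁, x₂, y⟩, rfl, rfl⟩ := hv
  calc (matA x₁ y).rank ≤ x₁.rank + ∑ h, (y h).rank := rank_matA_le x₁ y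
    _ ≤ w₁ + ∑ _h : Fin r, (matB x₂ y).rank :=
      add_le_add x₁.rank_le_width (Finset.sum_le_sum fun h _ => rank_le_rank_matB x₂ y h)
    _ = w₁ + r * (matB x₂ y).rank := by simp

theorem le_height (hv : RanksRealizable r w₁ w₁' w₂ w₂' v₁ v₂) : v₁ ≤ w₁' := by
  obtain ⟨⟨x₁, x₂, y⟩, rfl, -⟩ := hv
  simpa using (matA x₁ y).rank_le_card_height

end RanksRealizable

section Construction

variable {r m n : ℕ}

def partialId (c : ℕ) : Matrix (Fin m) (Fin n) ℂ :=
  Matrix.of fun t j => if (j : ℕ) = t ∧ (t : ℕ) < c then 1 else 0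

def stairBlock (c v₁ v₂ : ℕ) (h : Fin r) : Matrix (Fin m) (Fin n) ℂ :=
  Matrix.of fun i j => if (i : ℕ) < v₁ ∧ (j : ℕ) = c + h * v₁ + i ∧ (j : ℕ) < v₂ then 1 else 0

theorem rank_matA_stairBlock {a c v₁ v₂ : ℕ} (hr : 0 < r) (hc : c + v₁ ≤ v₂) (hv₁ : v₁ ≤ m)
    (hv₂ : v₂ ≤ n) :
    (matA (0 : Matrix (Fin m) (Fin a) ℂ)
      (stairBlock c v₁ v₂ : Fin r → Matrix (Fin m) (Fin n) ℂ)).rank = v₁ := by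
  set s : Finset (Fin m) := {i | (i : ℕ) < v₁}
  have hs : s.card = v₁ := by simp [s, Fin.card_filter_val_lt, hv₁]
  apply le_antisymm
  · refine (rank_le_card_of_support_subset _ s (Function.support_subset_iff'.2 fun i hi => ?_)).trans
      hs.le
    replace hi : v₁ ≤ (i : ℕ) := by simpa [s] using hi
    ext (j | ⟨h, j⟩)
    · rfl
    · exact if_neg (by omega)
  · rw [← rank_transpose]
    refine hs.ge.trans (card_le_rank_of_forall_exists_row_eq_single _ s fun i hi => ?_)
    replace hi : (i : ℕ) < v₁ := by simpa [s] using hi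
    refine ⟨Sum.inr (⟨0, hr⟩, ⟨c + i, by omega⟩), funext fun i' => ?_⟩
    rw [Pi.single_apply]
    exact if_congr (by simp only [Fin.ext_iff]; omega) rfl rfl

theorem rank_matB_stairBlock {b c v₁ v₂ : ℕ} (hc : c ≤ m) (hcv : c ≤ v₂) (hcov : v₂ ≤ c + r * v₁)
    (hv₁ : v₁ ≤ b) (hv₂ : v₂ ≤ n) :
    (matB (partialId c : Matrix (Fin m) (Fin n) ℂ)
      (stairBlock c v₁ v₂ : Fin r → Matrix (Fin b) (Fin n) ℂ)).rank = v₂ := by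
  set s : Finset (Fin n) := {j | (j : ℕ) < v₂}
  have hs : s.card = v₂ := by simp [s, Fin.card_filter_val_lt, hv₂]
  apply le_antisymm
  · rw [← rank_transpose]
    refine (rank_le_card_of_support_subset _ s (Function.support_subset_iff'.2 fun j hj => ?_)).trans
      hs.le
    replace hj : v₂ ≤ (j : ℕ) := by simpa [s] using hj
    ext (t | ⟨h, i⟩) <;> exact if_neg (by omega)
  · refine hs.ge.trans (card_le_rank_of_forall_exists_row_eq_single _ s fun j hj => ?_)
    replace hj : (j : ℕ) < v₂ := by simpa [s] using hj
    by_cases hjc : (j : ℕ) < c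
    · refine ⟨Sum.inl ⟨j, by omega⟩, funext fun j' => ?_⟩
      rw [Pi.single_apply]
      exact if_congr (by simp only [Fin.ext_iff]; omega) rfl rfl
    · have hv₁pos : 0 < v₁ := Nat.pos_of_ne_zero fun hv₁0 => by simp [hv₁0] at hcov; omega
      have hdiv := Nat.div_add_mod' (j - c) v₁
      have hmod := Nat.mod_lt (j - c) hv₁pos
      refine ⟨Sum.inr (⟨(j - c) / v₁, (Nat.div_lt_iff_lt_mul hv₁pos).2 (by omega)⟩,
        ⟨(j - c) % v₁, by omega⟩), funext fun j' => ?_⟩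
      rw [Pi.single_apply]
      exact if_congr (by simp only [Fin.ext_iff]; omega) rfl rfl

end Construction

theorem RanksRealizable.of_le {r w₁ w₁' w₂ w₂' v₁ v₂ : ℕ} (hr : 0 < r) (hv : v₁ ≤ v₂)
    (h₁ : v₁ ≤ w₁') (h₂ : v₂ ≤ w₂) (h₃ : v₂ ≤ w₂' + r * v₁) :
    RanksRealizable r w₁ w₁' w₂ w₂' v₁ v₂ :=
  ⟨(0, partialId (v₂ - r * v₁), stairBlock (v₂ - r * v₁) v₁ v₂),
    rank_matA_stairBlock hr (by have := Nat.le_mul_of_pos_left v₁ hr; omega) h₁ h₂,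
    rank_matB_stairBlock (by omega) (by omega) (by omega) h₁ h₂⟩

theorem stmt_3 (r w₁ w₁' w₂ w₂' v₁ v₂ : ℕ) (hr : 0 < r) :
    (∃ p : EW r w₁ w₁' w₂ w₂',
        (matA p.1 p.2.2).rank = v₁ ∧ (matB p.2.1 p.2.2).rank = v₂) ↔
    (v₁ ≤ w₁ + r * v₂ ∧ v₁ ≤ w₁' ∧ v₂ ≤ w₂ ∧ v₂ ≤ w₂' + r * v₁) := by
  change RanksRealizable r w₁ w₁' w₂ w₂' v₁ v₂ ↔ _
  refine ⟨fun hv => ⟨hv.le_add_mul, hv.le_height, hv.swap.le_height, hv.swap.le_add_mul⟩, ?_⟩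
  rintro ⟨h₁, h₂, h₃, h₄⟩
  rcases le_total v₁ v₂ with hv | hv
  · exact .of_le hr hv h₂ h₃ h₄
  · exact (RanksRealizable.of_le hr hv h₃ h₂ h₁).swap
end
end

section
/- Let r be a positive integer, w = (w₁, w₁', w₂, w₂') ∈ ℤ≥0⁴ and v = (v₁, v₂) ∈ ℤ≥0² with v₁ ≤ w₁' and v₂ ≤ w₂' + r·v₁. Then for every tuple (x₁, x₂, y₁, …, y_r) ∈ E_w with rank A ≤ v₁ and rank B ≤ v₂, there exist ℂ-subspaces X₁ ⊆ ℂ^{w₁'} and X₂ ⊆ ℂ^{w₂'} × (ℂ^{w₁'})^r with dim X₁ = v₁, dim X₂ = v₂, X₂ ⊆ ℂ^{w₂'} × X₁^{×r}, the column space of A contained in X₁, and the column space of B contained in X₂. (This is the set-theoretic surjectivity of the projection π : 𝓕̃_{v,w} → E_{v,w}.) -/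
open Matrix

noncomputable section

/-!
Take for `X₁` any `v₁`-dimensional subspace containing the column space of `A`. Every column of
`B` has its `h`-th block in the column space of `y_h`, which lies in that of `A`; so the column
space of `B` lies in `ℂ^{w₂'} × X₁^{×r}`, a space of dimension `w₂' + r v₁ ≥ v₂`, and `X₂` is
any `v₂`-dimensional subspace in between.
-/

open Module

theorem Submodule.exists_le_le_finrank_eq {K V : Type*} [DivisionRing K] [AddCommGroup V]
    [Module K V] [FiniteDimensional K V] {N P : Submodule K V} (hNP : N ≤ P) {k : ℕ}
    (hN : finrank K N ≤ k) (hP : k ≤ finrank K P) :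
    ∃ M : Submodule K V, N ≤ M ∧ M ≤ P ∧ finrank K M = k := by
  obtain ⟨d, rfl⟩ := Nat.exists_eq_add_of_le hN
  induction d with
  | zero => exact ⟨N, le_rfl, hNP, rfl⟩
  | succ d ih =>
    obtain ⟨M, hNM, hMP, hM⟩ := ih (by omega) (by omega)
    have hMP' : M < P := lt_of_le_of_ne hMP fun h => by rw [h] at hM; omega
    obtain ⟨x, hxP, hxM⟩ := SetLike.exists_of_lt hMP'
    refine ⟨M ⊔ span K {x}, hNM.trans le_sup_left,
      sup_le hMP ((span_singleton_le_iff_mem x P).2 hxP), ?_⟩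
    rw [finrank_sup_span_singleton hxM, hM, add_assoc]

section prodSub

variable {r w₂' w₁' : ℕ}

theorem mem_prodSub {X₁ : Submodule ℂ (Fin w₁' → ℂ)} {v : Fin w₂' ⊕ Fin r × Fin w₁' → ℂ} :
    v ∈ prodSub r w₂' w₁' X₁ ↔ ∀ h : Fin r, (fun i => v (Sum.inr (h, i))) ∈ X₁ := by
  simp only [prodSub, Submodule.mem_iInf, Submodule.mem_comap]
  rfl

theorem prodSub_mono {X₁ Y₁ : Submodule ℂ (Fin w₁' → ℂ)} (hXY : X₁ ≤ Y₁) :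
    prodSub r w₂' w₁' X₁ ≤ prodSub r w₂' w₁' Y₁ :=
  fun _ hv => mem_prodSub.2 fun h => hXY (mem_prodSub.1 hv h)

def prodSubEquiv (X₁ : Submodule ℂ (Fin w₁' → ℂ)) :
    ((Fin w₂' → ℂ) × (Fin r → X₁)) ≃ₗ[ℂ] prodSub r w₂' w₁' X₁ where
  toFun p := ⟨Sum.elim p.1 fun q => (p.2 q.1 : Fin w₁' → ℂ) q.2,
    mem_prodSub.2 fun h => (p.2 h).2⟩
  invFun v := (fun i => v.1 (Sum.inl i),
    fun h => ⟨fun i => v.1 (Sum.inr (h, i)), mem_prodSub.1 v.2 h⟩)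
  map_add' p q := by ext (i | ⟨h, i⟩) <;> rfl
  map_smul' c p := by ext (i | ⟨h, i⟩) <;> rfl
  left_inv p := rfl
  right_inv v := by ext (i | ⟨h, i⟩) <;> rfl

theorem finrank_prodSub (X₁ : Submodule ℂ (Fin w₁' → ℂ)) :
    finrank ℂ (prodSub r w₂' w₁' X₁) = w₂' + r * finrank ℂ X₁ := by
  simp [← (prodSubEquiv X₁).finrank_eq, Module.finrank_pi_fintype]

end prodSub

section blocks

variable {r m a b n : ℕ}

theorem mulVec_mem_range_matA (x₁ : Matrix (Fin m) (Fin a) ℂ)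
    (y : Fin r → Matrix (Fin m) (Fin b) ℂ) (h : Fin r) (c : Fin b → ℂ) :
    y h *ᵥ c ∈ LinearMap.range (matA x₁ y).mulVecLin := by
  refine ⟨Sum.elim 0 fun p => Pi.single (M := fun _ => Fin b → ℂ) h c p.1 p.2, ?_⟩
  funext i
  simp [matA, mulVec, dotProduct, Fintype.sum_sum_type, Fintype.sum_prod_type, Pi.single_apply,
    ite_apply, mul_ite]

theorem range_matB_le_prodSub (x₁ : Matrix (Fin m) (Fin a) ℂ) (x₂ : Matrix (Fin n) (Fin b) ℂ)
    (y : Fin r → Matrix (Fin m) (Fin b) ℂ) :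
    LinearMap.range (matB x₂ y).mulVecLin ≤
      prodSub r n m (LinearMap.range (matA x₁ y).mulVecLin) := by
  rintro _ ⟨c, rfl⟩
  exact mem_prodSub.2 fun h => mulVec_mem_range_matA x₁ y h c

end blocks

theorem stmt_5_general (r w₁ w₁' w₂ w₂' v₁ v₂ : ℕ)
    (hv₁ : v₁ ≤ w₁') (hv₂ : v₂ ≤ w₂' + r * v₁)
    (x₁ : Matrix (Fin w₁') (Fin w₁) ℂ) (x₂ : Matrix (Fin w₂') (Fin w₂) ℂ)
    (y : Fin r → Matrix (Fin w₁') (Fin w₂) ℂ)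
    (hA : (matA x₁ y).rank ≤ v₁) (hB : (matB x₂ y).rank ≤ v₂) :
    ∃ (X₁ : Submodule ℂ (Fin w₁' → ℂ))
      (X₂ : Submodule ℂ (Fin w₂' ⊕ Fin r × Fin w₁' → ℂ)),
      Module.finrank ℂ X₁ = v₁ ∧ Module.finrank ℂ X₂ = v₂ ∧
      X₂ ≤ prodSub r w₂' w₁' X₁ ∧
      LinearMap.range (matA x₁ y).mulVecLin ≤ X₁ ∧
      LinearMap.range (matB x₂ y).mulVecLin ≤ X₂ := by
  obtain ⟨X₁, hAX₁, -, hX₁⟩ :=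
    Submodule.exists_le_le_finrank_eq le_top hA (by simpa using hv₁)
  obtain ⟨X₂, hBX₂, hX₂X₁, hX₂⟩ := Submodule.exists_le_le_finrank_eq
    ((range_matB_le_prodSub x₁ x₂ y).trans (prodSub_mono hAX₁)) hB
    (by rwa [finrank_prodSub, hX₁])
  exact ⟨X₁, X₂, hX₁, hX₂, hX₂X₁, hAX₁, hBX₂⟩

theorem stmt_5 (r w₁ w₁' w₂ w₂' v₁ v₂ : ℕ) (hr : 0 < r)
    (hv₁ : v₁ ≤ w₁') (hv₂ : v₂ ≤ w₂' + r * v₁)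
    (x₁ : Matrix (Fin w₁') (Fin w₁) ℂ) (x₂ : Matrix (Fin w₂') (Fin w₂) ℂ)
    (y : Fin r → Matrix (Fin w₁') (Fin w₂) ℂ)
    (hA : (matA x₁ y).rank ≤ v₁) (hB : (matB x₂ y).rank ≤ v₂) :
    ∃ (X₁ : Submodule ℂ (Fin w₁' → ℂ))
      (X₂ : Submodule ℂ (Fin w₂' ⊕ Fin r × Fin w₁' → ℂ)),
      Module.finrank ℂ X₁ = v₁ ∧ Module.finrank ℂ X₂ = v₂ ∧
      X₂ ≤ prodSub r w₂' w₁' X₁ ∧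
      LinearMap.range (matA x₁ y).mulVecLin ≤ X₁ ∧
      LinearMap.range (matB x₂ y).mulVecLin ≤ X₂ :=
  stmt_5_general r w₁ w₁' w₂ w₂' v₁ v₂ hv₁ hv₂ x₁ x₂ y hA hB
end
end

section
/- Let r be a positive integer, w = (w₁, w₁', w₂, w₂') ∈ ℤ≥0⁴, and let v = (v₁,v₂), v' = (v₁',v₂') ∈ ℤ≥0² be such that (v, w) and (v', w) are both l-dominant, v₁' ≤ v₁, v₂' ≤ v₂, and v' ≠ v. Then, in ℤ, v₂'·(w₂ + w₂' + r·v₁' − v₂') + v₁'·(w₁ + w₁' − v₁') + (v₂ − v₂')·(w₂' + r·v₁ − v₂) + (v₁ − v₁')·(w₁' − v₁) ≤ v₂·(w₂ + w₂' + r·v₁ − v₂) + v₁·(w₁ + w₁' − v₁) − 1. (The left-hand side is the dimension of the preimage under π of the stratum E°_{v',w} inside 𝓕̃_{v,w}, and the right-hand side is dim 𝓕̃_{v,w} − 1; this is the codimension estimate used to prove simple connectedness of E°_{v,w}.) -/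
lemma LDominant.one_le_codim {r w₁ w₁' w₂ w₂' v₁ v₂ v₁' v₂' : ℕ}
    (hv : LDominant r w₁ w₁' w₂ w₂' v₁ v₂) (hv' : LDominant r w₁ w₁' w₂ w₂' v₁' v₂')
    (h₁ : v₁' ≤ v₁) (h₂ : v₂' ≤ v₂) (hne : (v₁', v₂') ≠ (v₁, v₂)) :
    1 ≤ ((v₁ : ℤ) - v₁') * (w₁ + r * v₂' - v₁') + ((v₂ : ℤ) - v₂') * (w₂ - v₂') := by
  obtain ⟨hv₁, -, hv₂, -⟩ := hv
  obtain ⟨hv'₁, -, -, -⟩ := hv'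
  rcases h₂.eq_or_lt with rfl | hlt
  · have hlt₁ : v₁' < v₁ := h₁.lt_of_ne fun h ↦ hne (by rw [h])
    have hfst : (1 : ℤ) ≤ ((v₁ : ℤ) - v₁') * (w₁ + r * v₂' - v₁') :=
      one_le_mul_of_one_le_of_one_le (by omega) (by omega)
    simpa using hfst
  · have hfst : (0 : ℤ) ≤ ((v₁ : ℤ) - v₁') * (w₁ + r * v₂' - v₁') :=
      mul_nonneg (by omega) (by omega)
    have hsnd : (1 : ℤ) ≤ ((v₂ : ℤ) - v₂') * (w₂ - v₂') :=
      one_le_mul_of_one_le_of_one_le (by omega) (by omega)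
    linarith

theorem stmt_11_general (r w₁ w₁' w₂ w₂' v₁ v₂ v₁' v₂' : ℕ)
    (hv : LDominant r w₁ w₁' w₂ w₂' v₁ v₂)
    (hv' : LDominant r w₁ w₁' w₂ w₂' v₁' v₂')
    (h₁ : v₁' ≤ v₁) (h₂ : v₂' ≤ v₂) (hne : (v₁', v₂') ≠ (v₁, v₂)) :
    (v₂' : ℤ) * ((w₂ : ℤ) + (w₂' : ℤ) + (r : ℤ) * (v₁' : ℤ) - (v₂' : ℤ))
      + (v₁' : ℤ) * ((w₁ : ℤ) + (w₁' : ℤ) - (v₁' : ℤ))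
      + ((v₂ : ℤ) - (v₂' : ℤ)) * ((w₂' : ℤ) + (r : ℤ) * (v₁ : ℤ) - (v₂ : ℤ))
      + ((v₁ : ℤ) - (v₁' : ℤ)) * ((w₁' : ℤ) - (v₁ : ℤ))
    ≤ (v₂ : ℤ) * ((w₂ : ℤ) + (w₂' : ℤ) + (r : ℤ) * (v₁ : ℤ) - (v₂ : ℤ))
      + (v₁ : ℤ) * ((w₁ : ℤ) + (w₁' : ℤ) - (v₁ : ℤ)) - 1 := by
  linear_combination hv.one_le_codim hv' h₁ h₂ hne

theorem stmt_11 (r w₁ w₁' w₂ w₂' v₁ v₂ v₁' v₂' : ℕ) (hr : 0 < r)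
    (hv : LDominant r w₁ w₁' w₂ w₂' v₁ v₂)
    (hv' : LDominant r w₁ w₁' w₂ w₂' v₁' v₂')
    (h₁ : v₁' ≤ v₁) (h₂ : v₂' ≤ v₂) (hne : (v₁', v₂') ≠ (v₁, v₂)) :
    (v₂' : ℤ) * ((w₂ : ℤ) + (w₂' : ℤ) + (r : ℤ) * (v₁' : ℤ) - (v₂' : ℤ))
      + (v₁' : ℤ) * ((w₁ : ℤ) + (w₁' : ℤ) - (v₁' : ℤ))
      + ((v₂ : ℤ) - (v₂' : ℤ)) * ((w₂' : ℤ) + (r : ℤ) * (v₁ : ℤ) - (v₂ : ℤ))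
      + ((v₁ : ℤ) - (v₁' : ℤ)) * ((w₁' : ℤ) - (v₁ : ℤ))
    ≤ (v₂ : ℤ) * ((w₂ : ℤ) + (w₂' : ℤ) + (r : ℤ) * (v₁ : ℤ) - (v₂ : ℤ))
      + (v₁ : ℤ) * ((w₁ : ℤ) + (w₁' : ℤ) - (v₁ : ℤ)) - 1 :=
  stmt_11_general r w₁ w₁' w₂ w₂' v₁ v₂ v₁' v₂' hv hv' h₁ h₂ hne
end

section
/- Let r be a positive integer and w₁, w₁', w₂, w₂', v₁, v₂ nonnegative integers with v₁ ≤ w₁' and v₂ ≤ w₂. Fix ℂ-subspaces X₁ ⊆ ℂ^{w₁'} with dim X₁ = v₁ and X₂' ⊆ ℂ^{w₂} with dim X₂' = v₂. Then the set of tuples (x₁, x₂, y₁, …, y_r) ∈ E_w such that every column of x₁ and of each y_h lies in X₁, and every row of x₂ and of each y_h (regarded as a vector in ℂ^{w₂}) lies in X₂', is a ℂ-linear subspace of E_w of dimension w₁·v₁ + w₂'·v₂ + r·v₁·v₂. (This computes the fiber of the vector bundle 𝓖̃_{v,w} → Gr(v₁,w₁') × Gr(v₂,w₂).) -/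
/-!
The subspace is a product: `x₁` ranges over the matrices with columns in `X₁`, `x₂` over those
with rows in `X₂'`, and each `y_h` over the matrices satisfying both conditions. The first two
are `w₁` copies of `X₁` and `w₂'` copies of `X₂'`. For the third, let `B` be the `v₂ × w₂` matrix
whose rows form a basis of `X₂'`. It has a right inverse `R`, so `Z ↦ Z * B` is injective and maps
onto the matrices with rows in `X₂'`, and `Z` has columns in `X₁` iff `Z * B` does, as
`Z = Z * B * R`.
So the third space is isomorphic to the `w₁' × v₂` matrices with columns in `X₁`, of dimension
`v₂ * v₁`.
-/

open Matrix

noncomputable section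

theorem Matrix.exists_mul_eq_one_of_linearIndependent_row {K n ι : Type*} [Field K] [Fintype n]
    [Fintype ι] [DecidableEq ι] {A : Matrix ι n K} (h : LinearIndependent K A.row) :
    ∃ R : Matrix n ι K, A * R = 1 := by
  rw [← mulVec_surjective_iff_exists_right_inverse, ← coe_mulVecLin, ← LinearMap.range_eq_top]
  refine Submodule.eq_top_of_finrank_eq ?_
  rw [Module.finrank_fintype_fun_eq_card, ← h.rank_matrix]
  rfl

namespace Submodule

section Equiv

variable {R M N ι : Type*} [Semiring R] [AddCommMonoid M] [Module R M] [AddCommMonoid N]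
  [Module R N]

def prodEquiv (p : Submodule R M) (q : Submodule R N) : p.prod q ≃ₗ[R] p × q where
  toFun x := (⟨x.1.1, x.2.1⟩, ⟨x.1.2, x.2.2⟩)
  invFun y := ⟨(y.1, y.2), y.1.2, y.2.2⟩
  map_add' _ _ := rfl
  map_smul' _ _ := rfl

def piEquiv {φ : ι → Type*} [∀ i, AddCommMonoid (φ i)] [∀ i, Module R (φ i)]
    (p : ∀ i, Submodule R (φ i)) : pi Set.univ p ≃ₗ[R] ∀ i, p i where
  toFun x i := ⟨x.1 i, x.2 i trivial⟩
  invFun y := ⟨fun i => y i, fun i _ => (y i).2⟩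
  map_add' _ _ := rfl
  map_smul' _ _ := rfl

end Equiv

variable {K : Type*} [Field K] {l m n ι : Type*}

def rowMatrices (m : Type*) (Y : Submodule K (n → K)) : Submodule K (Matrix m n K) where
  carrier := {M | ∀ i, M i ∈ Y}
  add_mem' hM hN i := Y.add_mem (hM i) (hN i)
  zero_mem' _ := Y.zero_mem
  smul_mem' c _ hM i := Y.smul_mem c (hM i)

def colMatrices (X : Submodule K (m → K)) (n : Type*) : Submodule K (Matrix m n K) where
  carrier := {M | ∀ j, (fun i => M i j) ∈ X}
  add_mem' hM hN j := X.add_mem (hM j) (hN j)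
  zero_mem' _ := X.zero_mem
  smul_mem' c _ hM j := X.smul_mem c (hM j)

variable {X : Submodule K (m → K)} {Y : Submodule K (n → K)}

theorem mem_rowMatrices {M : Matrix m n K} : M ∈ rowMatrices m Y ↔ ∀ i, M i ∈ Y := Iff.rfl

theorem mem_colMatrices {M : Matrix m n K} :
    M ∈ colMatrices X n ↔ ∀ j, (fun i => M i j) ∈ X := Iff.rfl

def rowMatricesEquiv (m : Type*) (Y : Submodule K (n → K)) : rowMatrices m Y ≃ₗ[K] (m → Y) where
  toFun M i := ⟨M.1 i, M.2 i⟩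
  invFun Z := ⟨fun i => Z i, fun i => (Z i).2⟩
  map_add' _ _ := rfl
  map_smul' _ _ := rfl

def colMatricesEquivRowMatrices (X : Submodule K (m → K)) (n : Type*) :
    colMatrices X n ≃ₗ[K] rowMatrices n X where
  toFun M := ⟨M.1ᵀ, M.2⟩
  invFun M := ⟨M.1ᵀ, M.2⟩
  map_add' _ _ := rfl
  map_smul' _ _ := rfl

theorem finrank_rowMatrices [Fintype m] [Finite n] (Y : Submodule K (n → K)) :
    Module.finrank K (rowMatrices m Y) = Fintype.card m * Module.finrank K Y := by
  rw [(rowMatricesEquiv m Y).finrank_eq, Module.finrank_pi_fintype, Finset.sum_const,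
    Finset.card_univ, smul_eq_mul]

theorem finrank_colMatrices [Finite m] [Fintype n] (X : Submodule K (m → K)) :
    Module.finrank K (colMatrices X n) = Fintype.card n * Module.finrank K X := by
  rw [(colMatricesEquivRowMatrices X n).finrank_eq, finrank_rowMatrices]

theorem mul_mem_colMatrices [Fintype n] {M : Matrix m n K} (hM : M ∈ colMatrices X n)
    (A : Matrix n l K) : M * A ∈ colMatrices X l := by
  intro j
  have hcol : (fun i => (M * A) i j) = ∑ k, A k j • fun i => M i k := by
    ext i
    simp [mul_apply, Finset.sum_apply, mul_comm]
  rw [hcol]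
  exact sum_mem fun k _ => smul_mem _ _ (hM k)

theorem mul_mem_rowMatrices [Fintype ι] (Z : Matrix m ι K) {A : Matrix ι n K}
    (hA : ∀ k, A k ∈ Y) : Z * A ∈ rowMatrices m Y := by
  intro i
  rw [mul_apply_eq_vecMul, vecMul_eq_sum]
  exact sum_mem fun k _ => smul_mem _ _ (hA k)

theorem exists_mul_eq_of_mem_rowMatrices [Fintype ι] (b : Module.Basis ι K Y)
    {M : Matrix m n K} (hM : M ∈ rowMatrices m Y) :
    ∃ Z : Matrix m ι K, Z * Matrix.of (fun k => (b k : n → K)) = M := by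
  refine ⟨Matrix.of fun i => b.equivFun ⟨M i, hM i⟩, funext fun i => ?_⟩
  rw [mul_apply_eq_vecMul, vecMul_eq_sum]
  have hsum := congrArg Subtype.val (b.sum_equivFun ⟨M i, hM i⟩)
  simp only [coe_sum, coe_smul] at hsum
  exact hsum

theorem colMatrices_inf_rowMatrices_eq_map [Fintype n] [Fintype ι] [DecidableEq ι]
    (X : Submodule K (m → K)) (b : Module.Basis ι K Y) {R : Matrix n ι K}
    (hR : Matrix.of (fun k => (b k : n → K)) * R = 1) :
    colMatrices X n ⊓ rowMatrices m Y =
      (colMatrices X ι).map (mulRightLinearMap m K (Matrix.of fun k => (b k : n → K))) := by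
  ext M
  simp only [mem_inf, mem_map, mulRightLinearMap_apply]
  constructor
  · rintro ⟨hX, hY⟩
    obtain ⟨Z, rfl⟩ := exists_mul_eq_of_mem_rowMatrices b hY
    refine ⟨Z * _ * R, mul_mem_colMatrices hX R, ?_⟩
    rw [Matrix.mul_assoc Z, hR, Matrix.mul_one]
  · rintro ⟨Z, hZ, rfl⟩
    exact ⟨mul_mem_colMatrices hZ _, mul_mem_rowMatrices Z fun k => (b k).2⟩

theorem finrank_colMatrices_inf_rowMatrices [Fintype m] [Fintype n] (X : Submodule K (m → K))
    (Y : Submodule K (n → K)) :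
    Module.finrank K ↥(colMatrices X n ⊓ rowMatrices m Y) =
      Module.finrank K X * Module.finrank K Y := by
  let b := Module.finBasis K Y
  obtain ⟨R, hR⟩ := exists_mul_eq_one_of_linearIndependent_row
    (A := Matrix.of fun k => (b k : n → K)) (b.linearIndependent.map' Y.subtype Y.ker_subtype)
  rw [colMatrices_inf_rowMatrices_eq_map X b hR,
    ← (equivMapOfInjective _ (mul_left_injective_of_inv _ _ hR) _).finrank_eq,
    finrank_colMatrices, Fintype.card_fin, mul_comm]

end Submodule

theorem stmt_12_general (r w₁ w₁' w₂ w₂' v₁ v₂ : ℕ)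
    (X₁ : Submodule ℂ (Fin w₁' → ℂ)) (hX₁ : Module.finrank ℂ X₁ = v₁)
    (X₂' : Submodule ℂ (Fin w₂ → ℂ)) (hX₂ : Module.finrank ℂ X₂' = v₂) :
    ∃ S : Submodule ℂ (EW r w₁ w₁' w₂ w₂'),
      (S : Set (EW r w₁ w₁' w₂ w₂')) =
        {p | (∀ j, (fun i => p.1 i j) ∈ X₁) ∧
             (∀ h j, (fun i => p.2.2 h i j) ∈ X₁) ∧
             (∀ i, (fun j => p.2.1 i j) ∈ X₂') ∧
             (∀ h i, (fun j => p.2.2 h i j) ∈ X₂')} ∧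
      Module.finrank ℂ S = w₁ * v₁ + w₂' * v₂ + r * v₁ * v₂ := by
  refine ⟨(X₁.colMatrices (Fin w₁)).prod ((X₂'.rowMatrices (Fin w₂')).prod
    (Submodule.pi Set.univ fun _ : Fin r =>
      X₁.colMatrices (Fin w₂) ⊓ X₂'.rowMatrices (Fin w₁'))), ?_, ?_⟩
  · ext p
    simp only [SetLike.mem_coe, Submodule.mem_prod, Submodule.mem_pi, Submodule.mem_inf,
      Submodule.mem_colMatrices, Submodule.mem_rowMatrices, Set.mem_univ, true_imp_iff,
      forall_and]
    exact ⟨fun ⟨h₁, h₂, h₃, h₄⟩ => ⟨h₁, h₃, h₂, h₄⟩, fun ⟨h₁, h₂, h₃, h₄⟩ => ⟨h₁, h₃, h₂, h₄⟩⟩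
  · rw [(Submodule.prodEquiv _ _).finrank_eq, Module.finrank_prod,
      (Submodule.prodEquiv _ _).finrank_eq, Module.finrank_prod,
      (Submodule.piEquiv _).finrank_eq, Module.finrank_pi_fintype]
    simp only [Submodule.finrank_colMatrices, Submodule.finrank_rowMatrices,
      Submodule.finrank_colMatrices_inf_rowMatrices, Fintype.card_fin, hX₁, hX₂,
      Finset.sum_const, Finset.card_univ, smul_eq_mul]
    ring

theorem stmt_12 (r w₁ w₁' w₂ w₂' v₁ v₂ : ℕ) (hr : 0 < r)
    (hv₁ : v₁ ≤ w₁') (hv₂ : v₂ ≤ w₂)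
    (X₁ : Submodule ℂ (Fin w₁' → ℂ)) (hX₁ : Module.finrank ℂ X₁ = v₁)
    (X₂' : Submodule ℂ (Fin w₂ → ℂ)) (hX₂ : Module.finrank ℂ X₂' = v₂) :
    ∃ S : Submodule ℂ (EW r w₁ w₁' w₂ w₂'),
      (S : Set (EW r w₁ w₁' w₂ w₂')) =
        {p | (∀ j, (fun i => p.1 i j) ∈ X₁) ∧
             (∀ h j, (fun i => p.2.2 h i j) ∈ X₁) ∧
             (∀ i, (fun j => p.2.1 i j) ∈ X₂') ∧
             (∀ h i, (fun j => p.2.2 h i j) ∈ X₂')} ∧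
      Module.finrank ℂ S = w₁ * v₁ + w₂' * v₂ + r * v₁ * v₂ :=
  stmt_12_general r w₁ w₁' w₂ w₂' v₁ v₂ X₁ hX₁ X₂' hX₂
end
end

section
/- Let r be a positive integer and w = (w₁, w₁', w₂, w₂') ∈ ℤ≥0⁴. Fix ℂ-subspaces X₁ ⊆ ℂ^{w₁'} with dim X₁ = v₁ and X₂ ⊆ ℂ^{w₂'} × (ℂ^{w₁'})^r with dim X₂ = v₂ and X₂ ⊆ ℂ^{w₂'} × X₁^{×r}. Then the set of tuples (x₁, x₂, y₁, …, y_r) ∈ E_w such that the column space of A is contained in X₁ and the column space of B is contained in X₂ is a ℂ-linear subspace of E_w of dimension w₁·v₁ + w₂·v₂. (This computes the fiber of the vector bundle 𝓕̃_{v,w} → 𝓕_{v,w}.) -/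
/-! The columns of `A` are those of `x₁` and of the `y_h`, and the `h`-th block of the `j`-th
column of `B` is the `j`-th column of `y_h`. Hence, since `X₂ ⊆ ℂ^{w₂'} × X₁^{×r}`, the condition
on `A` reduces to the columns of `x₁` lying in `X₁`. As `(x₁, x₂, y) ↦ (x₁, B)` is a linear
isomorphism, the fibre is identified with `X₁^{w₁} × X₂^{w₂}`. -/

open Matrix

noncomputable section

namespace Matrix

theorem range_mulVecLin_le_iff {R : Type*} [CommSemiring R] {m n : Type*} [Fintype n]
    (M : Matrix m n R) (X : Submodule R (m → R)) :
    LinearMap.range M.mulVecLin ≤ X ↔ ∀ j, M.col j ∈ X := by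
  rw [range_mulVecLin, Submodule.span_le, Set.range_subset_iff]
  rfl

section OfColsIn

variable {R : Type*} [Semiring R] {m : Type*} (n : Type*) (X : Submodule R (m → R))

def ofColsIn : (n → X) →ₗ[R] Matrix m n R where
  toFun c := of fun i j => (c j : m → R) i
  map_add' _ _ := rfl
  map_smul' _ _ := rfl

variable {n X}

theorem col_ofColsIn (c : n → X) (j : n) : (ofColsIn n X c).col j = c j := rfl

theorem ofColsIn_injective : Function.Injective (ofColsIn n X) := fun c d h =>
  funext fun j => Subtype.ext <| by rw [← col_ofColsIn, h, col_ofColsIn]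

theorem mem_range_ofColsIn_iff {M : Matrix m n R} :
    M ∈ LinearMap.range (ofColsIn n X) ↔ ∀ j, M.col j ∈ X :=
  ⟨by rintro ⟨c, rfl⟩ j; exact (c j).2, fun h => ⟨fun j => ⟨M.col j, h j⟩, rfl⟩⟩

end OfColsIn

end Matrix

def matBEquiv {r n a b : ℕ} : (Matrix (Fin a) (Fin n) ℂ × (Fin r → Matrix (Fin b) (Fin n) ℂ)) ≃ₗ[ℂ]
    Matrix (Fin a ⊕ Fin r × Fin b) (Fin n) ℂ where
  toFun p := matB p.1 p.2
  invFun M := (of fun i j => M (Sum.inl i) j, fun h => of fun i j => M (Sum.inr (h, i)) j)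
  map_add' _ _ := by ext (_ | _) _ <;> rfl
  map_smul' _ _ := by ext (_ | _) _ <;> rfl
  left_inv _ := rfl
  right_inv _ := by ext (_ | _) _ <;> rfl

theorem range_matA_le_iff {r m a b : ℕ} (x₁ : Matrix (Fin m) (Fin a) ℂ)
    (y : Fin r → Matrix (Fin m) (Fin b) ℂ) (X : Submodule ℂ (Fin m → ℂ)) :
    LinearMap.range (matA x₁ y).mulVecLin ≤ X ↔
      (∀ j, x₁.col j ∈ X) ∧ ∀ h j, (y h).col j ∈ X := by
  rw [range_mulVecLin_le_iff]
  exact ⟨fun hA => ⟨fun j => hA (Sum.inl j), fun h j => hA (Sum.inr (h, j))⟩,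
    fun ⟨hx, hy⟩ => Sum.rec hx fun p => hy p.1 p.2⟩

theorem col_mem_of_range_matB_le_prodSub {r n a b : ℕ} {x₂ : Matrix (Fin a) (Fin n) ℂ}
    {y : Fin r → Matrix (Fin b) (Fin n) ℂ} {X : Submodule ℂ (Fin b → ℂ)}
    (hB : LinearMap.range (matB x₂ y).mulVecLin ≤ prodSub r a b X) (h : Fin r) (j : Fin n) :
    (y h).col j ∈ X := by
  have hcol := (range_mulVecLin_le_iff _ _).1 hB j
  rw [prodSub, Submodule.mem_iInf] at hcol
  exact hcol h

theorem range_matA_le_and_range_matB_le_iff {r n a b c : ℕ} {X₁ : Submodule ℂ (Fin b → ℂ)}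
    {X₂ : Submodule ℂ (Fin a ⊕ Fin r × Fin b → ℂ)} (hsub : X₂ ≤ prodSub r a b X₁)
    (x₁ : Matrix (Fin b) (Fin c) ℂ) (x₂ : Matrix (Fin a) (Fin n) ℂ)
    (y : Fin r → Matrix (Fin b) (Fin n) ℂ) :
    (LinearMap.range (matA x₁ y).mulVecLin ≤ X₁ ∧ LinearMap.range (matB x₂ y).mulVecLin ≤ X₂) ↔
      (∀ j, x₁.col j ∈ X₁) ∧ ∀ j, (matB x₂ y).col j ∈ X₂ := by
  rw [range_matA_le_iff, range_mulVecLin_le_iff]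
  refine ⟨fun ⟨⟨hx, _⟩, hB⟩ => ⟨hx, hB⟩, fun ⟨hx, hB⟩ => ⟨⟨hx, ?_⟩, hB⟩⟩
  exact col_mem_of_range_matB_le_prodSub <|
    ((range_mulVecLin_le_iff _ _).2 hB).trans hsub

theorem stmt_13_general (r w₁ w₁' w₂ w₂' v₁ v₂ : ℕ)
    (X₁ : Submodule ℂ (Fin w₁' → ℂ)) (hX₁ : Module.finrank ℂ X₁ = v₁)
    (X₂ : Submodule ℂ (Fin w₂' ⊕ Fin r × Fin w₁' → ℂ)) (hX₂ : Module.finrank ℂ X₂ = v₂)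
    (hsub : X₂ ≤ prodSub r w₂' w₁' X₁) :
    ∃ S : Submodule ℂ (EW r w₁ w₁' w₂ w₂'),
      (S : Set (EW r w₁ w₁' w₂ w₂')) =
        {p | LinearMap.range (matA p.1 p.2.2).mulVecLin ≤ X₁ ∧
             LinearMap.range (matB p.2.1 p.2.2).mulVecLin ≤ X₂} ∧
      Module.finrank ℂ S = w₁ * v₁ + w₂ * v₂ := by
  let φ : EW r w₁ w₁' w₂ w₂' ≃ₗ[ℂ] _ := (LinearEquiv.refl ℂ _).prodCongr matBEquiv
  let ψ := (ofColsIn (Fin w₁) X₁).prodMap (ofColsIn (Fin w₂) X₂)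
  refine ⟨(LinearMap.range ψ).comap φ.toLinearMap, ?_, ?_⟩
  · ext ⟨x₁, x₂, y⟩
    rw [Set.mem_ofPred_eq, range_matA_le_and_range_matB_le_iff hsub, SetLike.mem_coe,
      Submodule.mem_comap, LinearMap.range_prodMap, Submodule.mem_prod, mem_range_ofColsIn_iff,
      mem_range_ofColsIn_iff]
    rfl
  · have hψ : Function.Injective ψ := ofColsIn_injective.prodMap ofColsIn_injective
    rw [Submodule.comap_equiv_eq_map_symm, LinearEquiv.finrank_map_eq,
      LinearMap.finrank_range_of_inj hψ, Module.finrank_prod, Module.finrank_pi_fintype,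
      Module.finrank_pi_fintype, hX₁, hX₂]
    simp only [Finset.sum_const, Finset.card_univ, Fintype.card_fin, smul_eq_mul]

theorem stmt_13 (r w₁ w₁' w₂ w₂' v₁ v₂ : ℕ) (hr : 0 < r)
    (X₁ : Submodule ℂ (Fin w₁' → ℂ)) (hX₁ : Module.finrank ℂ X₁ = v₁)
    (X₂ : Submodule ℂ (Fin w₂' ⊕ Fin r × Fin w₁' → ℂ)) (hX₂ : Module.finrank ℂ X₂ = v₂)
    (hsub : X₂ ≤ prodSub r w₂' w₁' X₁) :
    ∃ S : Submodule ℂ (EW r w₁ w₁' w₂ w₂'),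
      (S : Set (EW r w₁ w₁' w₂ w₂')) =
        {p | LinearMap.range (matA p.1 p.2.2).mulVecLin ≤ X₁ ∧
             LinearMap.range (matB p.2.1 p.2.2).mulVecLin ≤ X₂} ∧
      Module.finrank ℂ S = w₁ * v₁ + w₂ * v₂ :=
  stmt_13_general r w₁ w₁' w₂ w₂' v₁ v₂ X₁ hX₁ X₂ hX₂ hsub
end
end

section
/- Let r ≥ 2 be an integer and let w₁', w₂ be positive real numbers with w₁'² − r·w₁'·w₂ + w₂² ≤ 0. Let v₁, v₂, y be real numbers satisfying 0 ≤ y ≤ v₂, r·y ≥ v₁, v₁ ≤ w₁', y ≤ w₂, r·v₁ ≥ y, (v₁, y) ≠ (0, 0), and −v₁² + r·v₁·v₂ − v₂² + w₁'·v₁ − w₂·v₂ ≥ 0. Then D₁ ≥ 0 or D₄ > 0, where D₁ = (v₁² − r·v₁·y + y²) + (w₁' − 2·v₁)·v₁ + (2·r·v₁ − 2·v₂ − w₂)·y and D₄ = 2·(y² + (r·v₁ − v₂ − w₂)·y). -/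
/-!
With `c = v₂ + w₂ - y - r v₁`, one has `D₁ = F + (v₂ - y) c` and `D₄ = -2 y c`, where `F ≥ 0` is
hypothesis `hF`. So `D₁ ≥ 0` when `c ≥ 0`, and `D₄ > 0` when `c < 0` and `y > 0`; finally `y = 0`
forces `v₁ = 0` through `v₁ ≤ r y` and `y ≤ r v₁` (as `r > 0`), and then `D₁ = 0`.
-/

section

variable {R : Type*} [CommRing R]

theorem d₁_eq_add_mul (r w₁' w₂ v₁ v₂ y : R) :
    (v₁ ^ 2 - r * v₁ * y + y ^ 2) + (w₁' - 2 * v₁) * v₁ + (2 * r * v₁ - 2 * v₂ - w₂) * y =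
      (-v₁ ^ 2 + r * v₁ * v₂ - v₂ ^ 2 + w₁' * v₁ - w₂ * v₂) +
        (v₂ - y) * (v₂ + w₂ - y - r * v₁) := by
  ring

theorem d₄_eq_mul (r w₂ v₁ v₂ y : R) :
    2 * (y ^ 2 + (r * v₁ - v₂ - w₂) * y) = 2 * y * -(v₂ + w₂ - y - r * v₁) := by
  ring

end

theorem stmt_15_general (r : ℤ) (hr : 2 ≤ r) (w₁' w₂ v₁ v₂ y : ℝ)
    (hy0 : 0 ≤ y) (hyv : y ≤ v₂)
    (h1 : v₁ ≤ (r : ℝ) * y) (h4 : y ≤ (r : ℝ) * v₁)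
    (hF : 0 ≤ -v₁ ^ 2 + (r : ℝ) * v₁ * v₂ - v₂ ^ 2 + w₁' * v₁ - w₂ * v₂) :
    0 ≤ (v₁ ^ 2 - (r : ℝ) * v₁ * y + y ^ 2) + (w₁' - 2 * v₁) * v₁
        + (2 * (r : ℝ) * v₁ - 2 * v₂ - w₂) * y ∨
    0 < 2 * (y ^ 2 + ((r : ℝ) * v₁ - v₂ - w₂) * y) := by
  rcases hy0.eq_or_lt with rfl | hy
  · have hr₀ : (0 : ℝ) < r := by exact_mod_cast hr.trans_lt' two_pos
    have hv₁ : v₁ = 0 :=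
      le_antisymm (by simpa using h1) ((mul_nonneg_iff_of_pos_left hr₀).1 (by simpa using h4))
    left
    simp [hv₁]
  by_cases hc : 0 ≤ v₂ + w₂ - y - r * v₁
  · left
    rw [d₁_eq_add_mul]
    exact add_nonneg hF (mul_nonneg (sub_nonneg.2 hyv) hc)
  · right
    rw [d₄_eq_mul]
    exact mul_pos (by positivity) (neg_pos.2 (not_le.1 hc))

theorem stmt_15 (r : ℤ) (hr : 2 ≤ r) (w₁' w₂ v₁ v₂ y : ℝ)
    (hw₁' : 0 < w₁') (hw₂ : 0 < w₂)
    (him : w₁' ^ 2 - (r : ℝ) * w₁' * w₂ + w₂ ^ 2 ≤ 0)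
    (hy0 : 0 ≤ y) (hyv : y ≤ v₂)
    (h1 : v₁ ≤ (r : ℝ) * y) (h2 : v₁ ≤ w₁')
    (h3 : y ≤ w₂) (h4 : y ≤ (r : ℝ) * v₁)
    (h5 : (v₁, y) ≠ (0, 0))
    (hF : 0 ≤ -v₁ ^ 2 + (r : ℝ) * v₁ * v₂ - v₂ ^ 2 + w₁' * v₁ - w₂ * v₂) :
    0 ≤ (v₁ ^ 2 - (r : ℝ) * v₁ * y + y ^ 2) + (w₁' - 2 * v₁) * v₁
        + (2 * (r : ℝ) * v₁ - 2 * v₂ - w₂) * y ∨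
    0 < 2 * (y ^ 2 + ((r : ℝ) * v₁ - v₂ - w₂) * y) :=
  stmt_15_general r hr w₁' w₂ v₁ v₂ y hy0 hyv h1 h4 hF
end
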